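/- For any natural number k ≥ 1 and any ε ≥ 0, if χ²_k denotes a chi-square random variable with k degrees of freedom, then P(χ²_k ≥ k(1+ε)) ≥ (1/(3√k·ε + 6))·exp(−kε/2). -/

import Mathlib

/-!
With `a = k / 2` and `t = k (1 + ε)`, the density of `χ²_k` is `f x = C x^(a-1) e^(-x/2)`.
For `c = 2√k - k` the function `F x = 2 x f x / (x + c)` decreases to `0` on `[t, ∞)` and
`-F' ≤ f` there, so the tail `P(χ²_k ≥ t)` is at least `F t`. Evaluating `F t` needs the
Stirling-type bound `√a Γ(a) ≤ 4 a^a e^(-a)` for half-integers `a`, which follows from the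
effective Stirling bound on factorials together with the log-convexity of `Γ`.
-/

open MeasureTheory ProbabilityTheory Real

noncomputable def chiSq (k : ℕ) : Measure ℝ := gammaMeasure ((k : ℝ) / 2) (1 / 2)

open Filter Set Topology
open scoped Nat

theorem Stirling.factorial_le_exp_one_mul_sqrt {n : ℕ} (hn : n ≠ 0) :
    (n ! : ℝ) ≤ exp 1 * √n * n ^ n * exp (-n) := by
  obtain ⟨m, rfl⟩ := Nat.exists_eq_succ_of_ne_zero hn
  have hseq : stirlingSeq (m + 1) ≤ exp 1 / √2 := by
    simpa [stirlingSeq_one] using Stirling.stirlingSeq'_antitone (Nat.zero_le m)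
  rw [Stirling.stirlingSeq, div_le_iff₀ (by positivity)] at hseq
  calc _ ≤ _ := hseq
    _ = _ := by
      rw [Real.sqrt_mul' _ (by positivity), div_pow, ← Real.exp_nat_mul, mul_one, Real.exp_neg]
      field_simp

theorem sqrt_mul_Gamma_natCast_le {n : ℕ} (hn : n ≠ 0) :
    √n * Gamma n ≤ exp 1 * n ^ n * exp (-n) := by
  have hn' : (0 : ℝ) < n := by positivity
  refine le_of_mul_le_mul_left ?_ (Real.sqrt_pos.mpr hn')
  calc √n * (√n * Gamma n) = n ! := by
        rw [← mul_assoc, Real.mul_self_sqrt hn'.le, ← Real.Gamma_nat_eq_factorial,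
          Real.Gamma_add_one hn'.ne']
    _ ≤ exp 1 * √n * n ^ n * exp (-n) := Stirling.factorial_le_exp_one_mul_sqrt hn
    _ = √n * (exp 1 * n ^ n * exp (-n)) := by ring

theorem sqrt_mul_Gamma_add_half_le_factorial (n : ℕ) :
    √n * Gamma (n + 1 / 2) ≤ n ! := by
  rcases Nat.eq_zero_or_pos n with rfl | hn
  · simp
  have hn' : (0 : ℝ) < n := by exact_mod_cast hn
  have hconv := Gamma_mul_add_mul_le_rpow_Gamma_mul_rpow_Gamma hn' (by positivity : (0 : ℝ) < n + 1)
    (by norm_num : (0 : ℝ) < 1 / 2) (by norm_num : (0 : ℝ) < 1 / 2) (by norm_num)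
  rw [show (1 / 2 : ℝ) * n + 1 / 2 * (n + 1) = n + 1 / 2 by ring, ← Real.sqrt_eq_rpow,
    ← Real.sqrt_eq_rpow, ← Real.sqrt_mul (Gamma_pos_of_pos hn').le] at hconv
  calc √n * Gamma (n + 1 / 2) ≤ √n * √(Gamma n * Gamma (n + 1)) := by gcongr
    _ = √(n * Gamma n * Gamma (n + 1)) := by rw [mul_assoc, Real.sqrt_mul hn'.le]
    _ = n ! := by
        rw [← Real.Gamma_add_one hn'.ne', Real.Gamma_nat_eq_factorial, ← sq,
          Real.sqrt_sq (by positivity)]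

theorem three_halves_mul_pow_le_add_half_pow {n : ℕ} (hn : n ≠ 0) :
    3 / 2 * (n : ℝ) ^ n ≤ (n + 1 / 2) ^ n := by
  have hn' : (0 : ℝ) < n := by positivity
  have hbern := one_add_mul_le_pow (a := 1 / (2 * (n : ℝ)))
    (by linarith [show 0 ≤ 1 / (2 * (n : ℝ)) by positivity]) n
  rw [show (1 : ℝ) + n * (1 / (2 * n)) = 3 / 2 by field_simp; ring] at hbern
  calc 3 / 2 * (n : ℝ) ^ n ≤ (1 + 1 / (2 * n)) ^ n * n ^ n := by gcongr
    _ = (n + 1 / 2) ^ n := by rw [← mul_pow]; congr 1; field_simp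

theorem exp_three_halves_lt_six : exp (3 / 2) < 6 := by
  have h : exp (3 / 2) ^ 2 = exp 1 ^ 3 := by
    rw [← Real.exp_nat_mul, ← Real.exp_nat_mul]; norm_num
  have he : exp 1 ^ 3 < 36 := by
    calc exp 1 ^ 3 < 2.7182818286 ^ 3 := by gcongr; exact Real.exp_one_lt_d9
      _ < 36 := by norm_num
  nlinarith [Real.exp_pos (3 / 2)]

theorem pi_mul_exp_one_lt_sixteen : π * exp 1 < 16 := by
  nlinarith [Real.pi_lt_d2, Real.exp_one_lt_d9, Real.pi_pos, Real.exp_pos 1]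

theorem sqrt_mul_Gamma_natCast_add_half_le (n : ℕ) :
    √(n + 1 / 2) * Gamma (n + 1 / 2) ≤
      4 * (n + 1 / 2) ^ (n + 1 / 2 : ℝ) * exp (-(n + 1 / 2)) := by
  set a : ℝ := n + 1 / 2 with ha_def
  have ha : 0 < a := by positivity
  have hpow : a ^ a = √a * a ^ n := by
    rw [ha_def, Real.rpow_add ha, Real.rpow_natCast, Real.sqrt_eq_rpow, mul_comm]
  have hexp : exp (-a) = exp (-n) * exp (-(1 / 2)) := by
    rw [ha_def, ← Real.exp_add]; ring_nf
  rw [hpow, hexp]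
  rcases Nat.eq_zero_or_pos n with rfl | hn
  · have hπ : √π ≤ 4 * exp (-(1 / 2)) := by
      rw [Real.sqrt_le_iff, mul_pow, ← Real.exp_nat_mul]
      refine ⟨by positivity, ?_⟩
      rw [show ((2 : ℕ) : ℝ) * -(1 / 2) = -1 by norm_num, Real.exp_neg, ← div_eq_mul_inv,
        le_div_iff₀ (Real.exp_pos 1)]
      linarith [pi_mul_exp_one_lt_sixteen]
    simp only [ha_def, CharP.cast_eq_zero, zero_add, pow_zero, neg_zero, Real.exp_zero, mul_one,
      one_mul, Gamma_one_half_eq]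
    nlinarith [Real.sqrt_nonneg (1 / 2 : ℝ)]
  · have hn0 : n ≠ 0 := hn.ne'
    have hn' : (0 : ℝ) < n := by exact_mod_cast hn
    calc √a * Gamma a = √(a / n) * (√n * Gamma a) := by
          rw [← mul_assoc, ← Real.sqrt_mul (by positivity), div_mul_cancel₀ _ hn'.ne']
      _ ≤ √(a / n) * (exp 1 * √n * n ^ n * exp (-n)) := by
          refine mul_le_mul_of_nonneg_left ?_ (Real.sqrt_nonneg _)
          exact (sqrt_mul_Gamma_add_half_le_factorial n).trans
            (Stirling.factorial_le_exp_one_mul_sqrt hn0)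
      _ = √a * (exp (3 / 2) * n ^ n) * (exp (-n) * exp (-(1 / 2))) := by
          have he : exp (3 / 2) * exp (-(1 / 2)) = exp 1 := by rw [← Real.exp_add]; norm_num
          rw [Real.sqrt_div ha.le, ← he]
          field_simp
      _ ≤ √a * (6 * n ^ n) * (exp (-n) * exp (-(1 / 2))) := by
          gcongr; exact exp_three_halves_lt_six.le
      _ ≤ √a * (4 * a ^ n) * (exp (-n) * exp (-(1 / 2))) := by
          gcongr √a * ?_ * _; linarith [three_halves_mul_pow_le_add_half_pow hn0]
      _ = 4 * (√a * a ^ n) * (exp (-n) * exp (-(1 / 2))) := by ring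

theorem sqrt_mul_Gamma_half_le {k : ℕ} (hk : k ≠ 0) :
    √(k / 2) * Gamma (k / 2) ≤ 4 * (k / 2) ^ (k / 2 : ℝ) * exp (-(k / 2)) := by
  obtain ⟨n, rfl | rfl⟩ := Nat.even_or_odd' k
  · have hn : n ≠ 0 := by omega
    rw [show ((2 * n : ℕ) : ℝ) / 2 = n by push_cast; ring, Real.rpow_natCast]
    have he : exp 1 ≤ 4 := by linarith [Real.exp_one_lt_d9]
    calc √n * Gamma n ≤ exp 1 * n ^ n * exp (-n) := sqrt_mul_Gamma_natCast_le hn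
      _ ≤ 4 * n ^ n * exp (-n) := by gcongr
  · rw [show ((2 * n + 1 : ℕ) : ℝ) / 2 = n + 1 / 2 by push_cast; ring]
    exact sqrt_mul_Gamma_natCast_add_half_le n

theorem ofReal_le_setLIntegral_Ioi_of_hasDerivAt {F g f : ℝ → ℝ} {t : ℝ}
    (hF : ∀ x ∈ Ici t, HasDerivAt F (-g x) x) (hg_nonneg : ∀ x ∈ Ioi t, 0 ≤ g x)
    (hg_le : ∀ x ∈ Ioi t, g x ≤ f x) (hF_lim : Tendsto F atTop (𝓝 0)) :
    ENNReal.ofReal (F t) ≤ ∫⁻ x in Ioi t, ENNReal.ofReal (f x) := by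
  have hF' : ∀ x ∈ Ici t, HasDerivAt (-F) (g x) x := fun x hx ↦ by
    simpa only [neg_neg] using (hF x hx).neg
  have hF'_lim : Tendsto (-F) atTop (𝓝 0) := neg_zero (G := ℝ) ▸ hF_lim.neg
  calc ENNReal.ofReal (F t) = ENNReal.ofReal (∫ x in Ioi t, g x) := by
        rw [integral_Ioi_of_hasDerivAt_of_nonneg' hF' hg_nonneg hF'_lim]; simp
    _ = ∫⁻ x in Ioi t, ENNReal.ofReal (g x) :=
        ofReal_integral_eq_lintegral_ofReal
          (integrableOn_Ioi_deriv_of_nonneg' hF' hg_nonneg hF'_lim)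
          (ae_restrict_of_forall_mem measurableSet_Ioi hg_nonneg)
    _ ≤ ∫⁻ x in Ioi t, ENNReal.ofReal (f x) :=
        setLIntegral_mono' measurableSet_Ioi fun x hx ↦ ENNReal.ofReal_le_ofReal (hg_le x hx)

theorem hasDerivAt_rpow_mul_exp_neg_mul_div {a r c x : ℝ} (hx : 0 < x) (hxc : x + c ≠ 0) :
    HasDerivAt (fun y ↦ y ^ a * exp (-(r * y)) / (y + c))
      (x ^ (a - 1) * exp (-(r * x)) * ((a - r * x) * (x + c) - x) / (x + c) ^ 2) x := by
  have hpow := Real.hasDerivAt_rpow_const (p := a) (Or.inl hx.ne')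
  have hexp := ((hasDerivAt_id x).const_mul r).neg.exp
  refine ((hpow.mul hexp).div ((hasDerivAt_id x).add_const c) hxc).congr_deriv ?_
  simp only [id, Pi.neg_apply, Pi.mul_apply]
  rw [show x ^ a = x ^ (a - 1) * x by rw [← Real.rpow_add_one hx.ne']; ring_nf]
  ring

theorem tendsto_rpow_mul_exp_neg_mul_div_atTop (a c : ℝ) {r : ℝ} (hr : 0 < r) :
    Tendsto (fun y ↦ y ^ a * exp (-(r * y)) / (y + c)) atTop (𝓝 0) := by
  have h := (tendsto_rpow_mul_exp_neg_mul_atTop_nhds_zero a r hr).mul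
    (tendsto_inv_atTop_zero.comp (tendsto_atTop_add_const_right _ c tendsto_id))
  simpa [neg_mul, div_eq_mul_inv] using h

theorem sub_mul_add_two_mul_le_sq {a b x : ℝ} (hb : 2 ≤ b) (hab : 4 * a ≤ b ^ 2)
    (hx : 2 * a ≤ x) :
    (x - 2 * a) * (x + (b - 2 * a)) + 2 * x ≤ (x + (b - 2 * a)) ^ 2 := by
  have hgap : (x + (b - 2 * a)) ^ 2 - ((x - 2 * a) * (x + (b - 2 * a)) + 2 * x) =
      (x - 2 * a) * (b - 2) + (b ^ 2 - 4 * a) := by ring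
  nlinarith [mul_nonneg (sub_nonneg.2 hx) (sub_nonneg.2 hb)]

theorem ofReal_le_gammaMeasure_Ici {a b t : ℝ} (ha : 0 < a) (hb : 2 ≤ b) (hab : 4 * a ≤ b ^ 2)
    (ht : 2 * a ≤ t) :
    ENNReal.ofReal (2 * t * gammaPDFReal a (1 / 2) t / (t + b - 2 * a)) ≤
      gammaMeasure a (1 / 2) (Ici t) := by
  set c := b - 2 * a with hc
  set C := (1 / 2 : ℝ) ^ a / Gamma a
  have hC : 0 < C := div_pos (by positivity) (Gamma_pos_of_pos ha)
  have hpdf : ∀ x, 0 ≤ x → gammaPDFReal a (1 / 2) x = C * x ^ (a - 1) * exp (-(1 / 2 * x)) :=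
    fun x hx ↦ if_pos hx
  let g x := C * x ^ (a - 1) * exp (-(1 / 2 * x)) *
    (((x - 2 * a) * (x + c) + 2 * x) / (x + c) ^ 2)
  have hg_nonneg : ∀ x ∈ Ioi t, 0 ≤ g x := fun x hx ↦ by
    have hx : 2 * a < x := by linarith [hx.out]
    have : 0 < x := by linarith
    have : 0 ≤ (x - 2 * a) * (x + c) := mul_nonneg (by linarith) (by linarith)
    positivity
  have hg_le : ∀ x ∈ Ioi t, g x ≤ gammaPDFReal a (1 / 2) x := fun x hx ↦ by
    have hx : 2 * a < x := by linarith [hx.out]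
    have hratio : ((x - 2 * a) * (x + c) + 2 * x) / (x + c) ^ 2 ≤ 1 :=
      (div_le_one (by nlinarith)).2 (sub_mul_add_two_mul_le_sq hb hab hx.le)
    have hx0 : 0 < x := by linarith
    rw [hpdf x hx0.le]
    exact mul_le_of_le_one_right (by positivity) hratio
  have hF : ∀ x ∈ Ici t,
      HasDerivAt (fun y ↦ 2 * C * (y ^ a * exp (-(1 / 2 * y)) / (y + c))) (-g x) x := by
    intro x hx
    have hx : 2 * a ≤ x := ht.trans hx
    refine ((hasDerivAt_rpow_mul_exp_neg_mul_div (by linarith) (by linarith)).const_mul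
      (2 * C)).congr_deriv ?_
    simp only [g]
    ring
  have hF_lim := (tendsto_rpow_mul_exp_neg_mul_div_atTop a c (r := 1 / 2) (by norm_num)).const_mul
    (2 * C)
  rw [mul_zero] at hF_lim
  have hFt : 2 * C * (t ^ a * exp (-(1 / 2 * t)) / (t + c)) =
      2 * t * gammaPDFReal a (1 / 2) t / (t + b - 2 * a) := by
    have ht0 : 0 < t := by linarith
    rw [hpdf t ht0.le, Real.rpow_sub_one ht0.ne', show t + b - 2 * a = t + c by rw [hc]; ring]
    field_simp
  rw [← hFt, gammaMeasure, withDensity_apply _ measurableSet_Ici]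
  calc _ ≤ ∫⁻ x in Ioi t, ENNReal.ofReal (gammaPDFReal a (1 / 2) x) :=
        ofReal_le_setLIntegral_Ioi_of_hasDerivAt hF hg_nonneg hg_le hF_lim
    _ ≤ _ := lintegral_mono_set Ioi_subset_Ici_self

theorem mul_gammaPDFReal {a r t : ℝ} (hr : 0 ≤ r) (ht : 0 < t) :
    t * gammaPDFReal a r t = (r * t) ^ a * exp (-(r * t)) / Gamma a := by
  rw [gammaPDFReal, if_pos ht.le, Real.mul_rpow hr ht.le, Real.rpow_sub_one ht.ne']
  field_simp

theorem sqrt_half_mul_exp_le_mul_gammaPDFReal {k : ℕ} (hk : k ≠ 0) {ε : ℝ} (hε : 0 ≤ ε) :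
    √(k / 2) / 4 * exp (-k * ε / 2) ≤
      k * (1 + ε) * gammaPDFReal (k / 2) (1 / 2) (k * (1 + ε)) := by
  set a : ℝ := k / 2 with ha_def
  have ha : 0 < a := by positivity
  have hΓ := sqrt_mul_Gamma_half_le hk
  rw [← ha_def] at hΓ
  rw [mul_gammaPDFReal (by norm_num) (by positivity),
    show 1 / 2 * (k * (1 + ε)) = a * (1 + ε) by rw [ha_def]; ring,
    Real.mul_rpow ha.le (by positivity), le_div_iff₀ (Gamma_pos_of_pos ha),
    show exp (-(a * (1 + ε))) = exp (-a) * exp (-k * ε / 2) by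
      rw [← Real.exp_add, ha_def]; ring_nf]
  calc √a / 4 * exp (-k * ε / 2) * Gamma a = (√a * Gamma a) / 4 * exp (-k * ε / 2) := by ring
    _ ≤ a ^ a * exp (-a) * exp (-k * ε / 2) := by gcongr; linarith
    _ ≤ a ^ a * exp (-a) * exp (-k * ε / 2) * (1 + ε) ^ a :=
        le_mul_of_one_le_right (by positivity) (Real.one_le_rpow (by linarith) ha.le)
    _ = a ^ a * (1 + ε) ^ a * (exp (-a) * exp (-k * ε / 2)) := by ring

/-- Chi-square upper-tail lower bound:
P(χ²_k ≥ k(1+ε)) ≥ (1/(3√k·ε + 6))·exp(−kε/2). -/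
theorem chiSq_upper_tail_lower_bound (k : ℕ) (hk : 1 ≤ k) (ε : ℝ) (hε : 0 ≤ ε) :
    chiSq k {x | (k : ℝ) * (1 + ε) ≤ x} ≥
      ENNReal.ofReal ((1 / (3 * Real.sqrt k * ε + 6)) * Real.exp (-(k : ℝ) * ε / 2)) := by
  have hk1 : (1 : ℝ) ≤ k := by exact_mod_cast hk
  have hsqrt : 1 ≤ √(k : ℝ) := Real.one_le_sqrt.mpr hk1
  have htail := ofReal_le_gammaMeasure_Ici (a := k / 2) (b := 2 * √k) (t := k * (1 + ε))
    (by positivity) (by linarith) (by rw [mul_pow, Real.sq_sqrt (by positivity)]; linarith)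
    (by nlinarith)
  have hdens := sqrt_half_mul_exp_le_mul_gammaPDFReal (k := k) (by omega) hε
  rw [Real.sqrt_div' _ (by norm_num : (0 : ℝ) ≤ 2)] at hdens
  set u := √(k : ℝ)
  rw [show (k : ℝ) * (1 + ε) + 2 * u - 2 * (k / 2) = k * ε + 2 * u by ring] at htail
  have hu : u ^ 2 = k := Real.sq_sqrt (by positivity)
  have hD : 0 < k * ε + 2 * u := by positivity
  have hcoef : 2 * √2 * (k * ε + 2 * u) ≤ u * (3 * u * ε + 6) := by
    nlinarith [mul_le_mul_of_nonneg_right sqrt_two_lt_three_halves.le hD.le]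
  refine le_trans (ENNReal.ofReal_le_ofReal ?_) htail
  calc 1 / (3 * u * ε + 6) * exp (-k * ε / 2)
      ≤ u / (2 * √2 * (k * ε + 2 * u)) * exp (-k * ε / 2) := by
        refine mul_le_mul_of_nonneg_right ?_ (Real.exp_pos _).le
        rw [div_le_div_iff₀ (by positivity) (by positivity)]
        linarith
    _ = 2 * (u / √2 / 4 * exp (-k * ε / 2)) / (k * ε + 2 * u) := by field_simp; ring
    _ ≤ 2 * (k * (1 + ε) * gammaPDFReal (k / 2) (1 / 2) (k * (1 + ε))) / (k * ε + 2 * u) := by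
        gcongr
    _ = _ := by ring
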